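/- Theorem 3 (validity of bounds with a back-door set and a mediator): let P be a probability mass function on Ω' supported on the consistency event {(r,w,z,u_obs,t) : u_obs = w t}, let k ≤ n, and suppose that for every t₀ the random variable r t₀ is conditionally independent of X given (w t₀, Z₁,…,Z_m) under P, and for all t₀ ≠ t₁ the random variable r t₀ is conditionally independent of w t₁ given (w t₀, Z₁,…,Z_m) under P (these conditional independences hold when Z₁,…,Z_m is a back-door set for X and Y with mediator W). Let T(P) be the set of probability mass functions Q on Ω' supported on the consistency event that satisfy (i) the experimental constraints Q((r t) = s ∧ ⋀_{i∈I} Z_i = z_i) = P((r t) = s ∧ ⋀_{i∈I} Z_i = z_i) for all s, t, all I ⊆ {1,…,m} and values z_i; (ii) the observational constraints Q(X = t ∧ (r t) = s ∧ w t = u ∧ ⋀_{i∈I} Z_i = z_i) = P(X = t ∧ (r t) = s ∧ w t = u ∧ ⋀_{i∈I} Z_i = z_i) for all s, t, u, I and z_i; (iii) the bilinear equalities Q(r t = s ∧ w t = u ∧ Z = z)·Q(w t = u ∧ Z = z ∧ X = v) = Q(r t = s ∧ w t = u ∧ Z = z ∧ X = v)·Q(w t = u ∧ Z = z) for all s, t,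 v, u, z; and (iv) the bilinear equalities Q(r t = s ∧ w t = u ∧ Z = z)·Q(w t = u ∧ w t' = v ∧ Z = z) = Q(r t = s ∧ w t = u ∧ w t' = v ∧ Z = z)·Q(w t = u ∧ Z = z) for all s, t ≠ t', u, v, z. Then P ∈ T(P), T(P) is a nonempty compact set, the objective Q ↦ Q({ω : r s = s for all s < k}) attains a minimum LB and a maximum UB on T(P), and LB ≤ PNS(k) ≤ UB, where PNS(k) := P({ω : r s = s for all s < k}). -/

import Mathlib

/-- The probability of an event `E` under a mass function `P` on a finite type. -/
noncomputable def prob {Ω : Type*} [Fintype Ω] (P : Ω → ℝ) (E : Set Ω) : ℝ :=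
  ∑ ω, E.indicator P ω

/-- The probability simplex: nonnegative functions summing to one. -/
def simplexSet (Ω : Type*) [Fintype Ω] : Set (Ω → ℝ) :=
  {Q | (∀ ω, 0 ≤ Q ω) ∧ ∑ ω, Q ω = 1}

/-- The mediator sample space `Ω'`: potential outcomes `r : Fin n → Fin n`
(`r s` is `Y_{x_s}`), potential mediators `w : Fin n → W` (`w s` is `W_{x_s}`),
covariates `z : Π i, Z i`, observed mediator `u_obs : W`, and treatment `t : Fin n`. -/
abbrev MedOmega (n m : ℕ) (Z : Fin m → Type) [∀ i, Fintype (Z i)]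
    (W : Type) [Fintype W] : Type :=
  (Fin n → Fin n) × (Fin n → W) × ((i : Fin m) → Z i) × W × Fin n

/-- The consistency event `{ω : u_obs = w t}`. -/
def consEvent (n m : ℕ) (Z : Fin m → Type) [∀ i, Fintype (Z i)]
    (W : Type) [Fintype W] : Set (MedOmega n m Z W) :=
  {ω | ω.2.2.2.1 = ω.2.1 ω.2.2.2.2}

/-- The Theorem 3 feasible set `T(P)`: mass functions supported on the consistency event
satisfying (i) the experimental constraints, (ii) the observational constraints (with the
observed mediator), (iii) the bilinear mediator equalities, and (iv) the bilinear
cross-mediator equalities. -/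
def medFeasible (n m : ℕ) (Z : Fin m → Type) [∀ i, Fintype (Z i)]
    (W : Type) [Fintype W] (P : MedOmega n m Z W → ℝ) :
    Set (MedOmega n m Z W → ℝ) :=
  {Q | Q ∈ simplexSet (MedOmega n m Z W) ∧
    (∀ ω, ω ∉ consEvent n m Z W → Q ω = 0) ∧
    (∀ (s t : Fin n) (I : Finset (Fin m)) (zv : (i : Fin m) → Z i),
      prob Q {ω | ω.1 t = s ∧ ∀ i ∈ I, ω.2.2.1 i = zv i} =
        prob P {ω | ω.1 t = s ∧ ∀ i ∈ I, ω.2.2.1 i = zv i}) ∧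
    (∀ (s t : Fin n) (u : W) (I : Finset (Fin m)) (zv : (i : Fin m) → Z i),
      prob Q {ω | ω.2.2.2.2 = t ∧ ω.1 t = s ∧ ω.2.1 t = u ∧ ∀ i ∈ I, ω.2.2.1 i = zv i} =
        prob P {ω | ω.2.2.2.2 = t ∧ ω.1 t = s ∧ ω.2.1 t = u ∧ ∀ i ∈ I, ω.2.2.1 i = zv i}) ∧
    (∀ (s t v : Fin n) (u : W) (z : (i : Fin m) → Z i),
      prob Q {ω | ω.1 t = s ∧ ω.2.1 t = u ∧ ω.2.2.1 = z} *
          prob Q {ω | ω.2.1 t = u ∧ ω.2.2.1 = z ∧ ω.2.2.2.2 = v} =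
        prob Q {ω | ω.1 t = s ∧ ω.2.1 t = u ∧ ω.2.2.1 = z ∧ ω.2.2.2.2 = v} *
          prob Q {ω | ω.2.1 t = u ∧ ω.2.2.1 = z}) ∧
    (∀ (s t t' : Fin n), t ≠ t' → ∀ (u v : W) (z : (i : Fin m) → Z i),
      prob Q {ω | ω.1 t = s ∧ ω.2.1 t = u ∧ ω.2.2.1 = z} *
          prob Q {ω | ω.2.1 t = u ∧ ω.2.1 t' = v ∧ ω.2.2.1 = z} =
        prob Q {ω | ω.1 t = s ∧ ω.2.1 t = u ∧ ω.2.1 t' = v ∧ ω.2.2.1 = z} *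
          prob Q {ω | ω.2.1 t = u ∧ ω.2.2.1 = z})}

/-- The PNS(k) event `{ω : r s = s for all s < k}` (after relabeling of outcomes). -/
def pnsEventMed (n m : ℕ) (Z : Fin m → Type) [∀ i, Fintype (Z i)]
    (W : Type) [Fintype W] (k : ℕ) : Set (MedOmega n m Z W) :=
  {ω | ∀ s : Fin n, (s : ℕ) < k → ω.1 s = s}

/-!
The true distribution `P` is itself feasible: the experimental and observational constraints
hold trivially, and the bilinear equalities (iii) and (iv) are the two conditional
independences with the denominators cleared. `T(P)` is a closed subset of the probability
simplex, hence compact, and the objective is continuous, so its image is a nonempty compact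
set of reals containing `PNS(k)`; its least and greatest elements are the bounds.
-/

section Prob

variable {Ω : Type*} [Fintype Ω]

lemma prob_nonneg {P : Ω → ℝ} (hP : ∀ ω, 0 ≤ P ω) (E : Set Ω) : 0 ≤ prob P E :=
  Finset.sum_nonneg fun ω _ => Set.indicator_nonneg (fun ω _ => hP ω) ω

lemma prob_mono {P : Ω → ℝ} (hP : ∀ ω, 0 ≤ P ω) {E F : Set Ω} (h : E ⊆ F) :
    prob P E ≤ prob P F :=
  Finset.sum_le_sum fun ω _ => Set.indicator_le_indicator_of_subset h hP ω

lemma prob_eq_zero_of_subset {P : Ω → ℝ} (hP : ∀ ω, 0 ≤ P ω) {E F : Set Ω} (h : E ⊆ F)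
    (hF : prob P F = 0) : prob P E = 0 :=
  le_antisymm (hF ▸ prob_mono hP h) (prob_nonneg hP E)

@[fun_prop]
lemma continuous_prob (E : Set Ω) : Continuous fun Q : Ω → ℝ => prob Q E := by
  classical
  refine continuous_finsetSum _ fun ω _ => ?_
  simp only [Set.indicator_apply]
  exact continuous_if_const _ (fun _ => continuous_apply ω) fun _ => continuous_const

lemma isCompact_simplexSet : IsCompact (simplexSet Ω) :=
  isCompact_stdSimplex ℝ Ω

lemma prob_inter_mul_prob_inter_eq_of_condIndep {P : Ω → ℝ} (hP : ∀ ω, 0 ≤ P ω)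
    {A B C : Set Ω}
    (hAB : 0 < prob P C →
      prob P (A ∩ (B ∩ C)) / prob P C = prob P (A ∩ C) / prob P C * (prob P (B ∩ C) / prob P C)) :
    prob P (A ∩ C) * prob P (B ∩ C) = prob P (A ∩ (B ∩ C)) * prob P C := by
  rcases (prob_nonneg hP C).lt_or_eq with hC | hC
  · have := hAB hC
    field_simp at this
    linarith
  · rw [prob_eq_zero_of_subset hP Set.inter_subset_right hC.symm, ← hC, zero_mul, mul_zero]

end Prob

lemma isClosed_setOf_forall {X : Type*} [TopologicalSpace X] {ι : Sort*} {p : ι → X → Prop}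
    (h : ∀ i, IsClosed {x | p i x}) : IsClosed {x | ∀ i, p i x} :=
  Set.ofPred_forall (p := p) ▸ isClosed_iInter h

lemma isClosed_medFeasible (n m : ℕ) (Z : Fin m → Type) [∀ i, Fintype (Z i)]
    (W : Type) [Fintype W] (P : MedOmega n m Z W → ℝ) :
    IsClosed (medFeasible n m Z W P) := by
  refine isCompact_simplexSet.isClosed.inter ?_
  repeat' first
    | intro _
    | apply IsClosed.and
    | apply isClosed_setOf_forall
  all_goals exact isClosed_eq (by fun_prop) (by fun_prop)

theorem theorem3_valid_bounds_general
    (n m : ℕ) (Z : Fin m → Type) [∀ i, Fintype (Z i)]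
    (W : Type) [Fintype W]
    (P : MedOmega n m Z W → ℝ) (hP : P ∈ simplexSet (MedOmega n m Z W))
    (hsupp : ∀ ω, ω ∉ consEvent n m Z W → P ω = 0)
    (k : ℕ)
    (hCI1 : ∀ (t₀ : Fin n) (u : W) (z₀ : (i : Fin m) → Z i),
      0 < prob P {ω | ω.2.1 t₀ = u ∧ ω.2.2.1 = z₀} →
      ∀ (s v : Fin n),
        prob P {ω | ω.1 t₀ = s ∧ ω.2.2.2.2 = v ∧ ω.2.1 t₀ = u ∧ ω.2.2.1 = z₀} /
            prob P {ω | ω.2.1 t₀ = u ∧ ω.2.2.1 = z₀} =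
          (prob P {ω | ω.1 t₀ = s ∧ ω.2.1 t₀ = u ∧ ω.2.2.1 = z₀} /
            prob P {ω | ω.2.1 t₀ = u ∧ ω.2.2.1 = z₀}) *
          (prob P {ω | ω.2.2.2.2 = v ∧ ω.2.1 t₀ = u ∧ ω.2.2.1 = z₀} /
            prob P {ω | ω.2.1 t₀ = u ∧ ω.2.2.1 = z₀}))
    (hCI2 : ∀ (t₀ t₁ : Fin n), t₀ ≠ t₁ → ∀ (u : W) (z₀ : (i : Fin m) → Z i),
      0 < prob P {ω | ω.2.1 t₀ = u ∧ ω.2.2.1 = z₀} →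
      ∀ (s : Fin n) (v : W),
        prob P {ω | ω.1 t₀ = s ∧ ω.2.1 t₁ = v ∧ ω.2.1 t₀ = u ∧ ω.2.2.1 = z₀} /
            prob P {ω | ω.2.1 t₀ = u ∧ ω.2.2.1 = z₀} =
          (prob P {ω | ω.1 t₀ = s ∧ ω.2.1 t₀ = u ∧ ω.2.2.1 = z₀} /
            prob P {ω | ω.2.1 t₀ = u ∧ ω.2.2.1 = z₀}) *
          (prob P {ω | ω.2.1 t₁ = v ∧ ω.2.1 t₀ = u ∧ ω.2.2.1 = z₀} /
            prob P {ω | ω.2.1 t₀ = u ∧ ω.2.2.1 = z₀})) :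
    P ∈ medFeasible n m Z W P ∧
    (medFeasible n m Z W P).Nonempty ∧
    IsCompact (medFeasible n m Z W P) ∧
    ∃ LB UB : ℝ,
      IsLeast ((fun Q => prob Q (pnsEventMed n m Z W k)) '' medFeasible n m Z W P) LB ∧
      IsGreatest ((fun Q => prob Q (pnsEventMed n m Z W k)) '' medFeasible n m Z W P) UB ∧
      LB ≤ prob P (pnsEventMed n m Z W k) ∧ prob P (pnsEventMed n m Z W k) ≤ UB := by
  have hPmem : P ∈ medFeasible n m Z W P := by
    refine ⟨hP, hsupp, fun _ _ _ _ => rfl, fun _ _ _ _ _ => rfl, fun s t v u z => ?_,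
      fun s t t' ht u v z => ?_⟩
    · convert prob_inter_mul_prob_inter_eq_of_condIndep (A := {ω | ω.1 t = s})
        (B := {ω | ω.2.2.2.2 = v}) (C := {ω | ω.2.1 t = u ∧ ω.2.2.1 = z}) hP.1
        (fun hC => hCI1 t u z hC s v) using 3 <;>
      · ext ω
        simp only [Set.mem_ofPred_eq, Set.mem_inter_iff, and_comm, and_left_comm]
    · convert prob_inter_mul_prob_inter_eq_of_condIndep (A := {ω | ω.1 t = s})
        (B := {ω | ω.2.1 t' = v}) (C := {ω | ω.2.1 t = u ∧ ω.2.2.1 = z}) hP.1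
        (fun hC => hCI2 t t' ht u z hC s v) using 3 <;>
      · ext ω
        simp only [Set.mem_ofPred_eq, Set.mem_inter_iff, and_left_comm]
  have hcompact : IsCompact (medFeasible n m Z W P) :=
    isCompact_simplexSet.of_isClosed_subset (isClosed_medFeasible n m Z W P) fun _ hQ => hQ.1
  have hne : (medFeasible n m Z W P).Nonempty := ⟨P, hPmem⟩
  have hvalues := hcompact.image (continuous_prob (pnsEventMed n m Z W k))
  obtain ⟨LB, hLB⟩ := hvalues.exists_isLeast (hne.image _)
  obtain ⟨UB, hUB⟩ := hvalues.exists_isGreatest (hne.image _)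
  exact ⟨hPmem, hne, hcompact, LB, UB, hLB, hUB, hLB.2 ⟨P, hPmem, rfl⟩, hUB.2 ⟨P, hPmem, rfl⟩⟩

/-- Theorem 3 (validity of bounds with a back-door set and a mediator): if `P` is supported
on the consistency event and satisfies the two families of conditional independences
`r t₀ ⫫ X ∣ (w t₀, Z)` and `r t₀ ⫫ w t₁ ∣ (w t₀, Z)` (for `t₀ ≠ t₁`), then `P ∈ T(P)`,
`T(P)` is a nonempty compact set, the objective attains a minimum `LB` and a maximum `UB`
on `T(P)`, and `LB ≤ PNS(k) ≤ UB`. -/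
theorem theorem3_valid_bounds
    (n m : ℕ) (Z : Fin m → Type) [∀ i, Fintype (Z i)] [∀ i, Nonempty (Z i)]
    (W : Type) [Fintype W] [Nonempty W]
    (P : MedOmega n m Z W → ℝ) (hP : P ∈ simplexSet (MedOmega n m Z W))
    (hsupp : ∀ ω, ω ∉ consEvent n m Z W → P ω = 0)
    (k : ℕ) (hk : k ≤ n)
    (hCI1 : ∀ (t₀ : Fin n) (u : W) (z₀ : (i : Fin m) → Z i),
      0 < prob P {ω | ω.2.1 t₀ = u ∧ ω.2.2.1 = z₀} →
      ∀ (s v : Fin n),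
        prob P {ω | ω.1 t₀ = s ∧ ω.2.2.2.2 = v ∧ ω.2.1 t₀ = u ∧ ω.2.2.1 = z₀} /
            prob P {ω | ω.2.1 t₀ = u ∧ ω.2.2.1 = z₀} =
          (prob P {ω | ω.1 t₀ = s ∧ ω.2.1 t₀ = u ∧ ω.2.2.1 = z₀} /
            prob P {ω | ω.2.1 t₀ = u ∧ ω.2.2.1 = z₀}) *
          (prob P {ω | ω.2.2.2.2 = v ∧ ω.2.1 t₀ = u ∧ ω.2.2.1 = z₀} /
            prob P {ω | ω.2.1 t₀ = u ∧ ω.2.2.1 = z₀}))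
    (hCI2 : ∀ (t₀ t₁ : Fin n), t₀ ≠ t₁ → ∀ (u : W) (z₀ : (i : Fin m) → Z i),
      0 < prob P {ω | ω.2.1 t₀ = u ∧ ω.2.2.1 = z₀} →
      ∀ (s : Fin n) (v : W),
        prob P {ω | ω.1 t₀ = s ∧ ω.2.1 t₁ = v ∧ ω.2.1 t₀ = u ∧ ω.2.2.1 = z₀} /
            prob P {ω | ω.2.1 t₀ = u ∧ ω.2.2.1 = z₀} =
          (prob P {ω | ω.1 t₀ = s ∧ ω.2.1 t₀ = u ∧ ω.2.2.1 = z₀} /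
            prob P {ω | ω.2.1 t₀ = u ∧ ω.2.2.1 = z₀}) *
          (prob P {ω | ω.2.1 t₁ = v ∧ ω.2.1 t₀ = u ∧ ω.2.2.1 = z₀} /
            prob P {ω | ω.2.1 t₀ = u ∧ ω.2.2.1 = z₀})) :
    P ∈ medFeasible n m Z W P ∧
    (medFeasible n m Z W P).Nonempty ∧
    IsCompact (medFeasible n m Z W P) ∧
    ∃ LB UB : ℝ,
      IsLeast ((fun Q => prob Q (pnsEventMed n m Z W k)) '' medFeasible n m Z W P) LB ∧
      IsGreatest ((fun Q => prob Q (pnsEventMed n m Z W k)) '' medFeasible n m Z W P) UB ∧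
      LB ≤ prob P (pnsEventMed n m Z W k) ∧ prob P (pnsEventMed n m Z W k) ≤ UB :=
  theorem3_valid_bounds_general n m Z W P hP hsupp k hCI1 hCI2
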